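/- arXiv:1805.02005 — 2 statements merged into one kernel-verified Lean document; each statement's English description precedes it below -/
import Mathlib

section
/- Let k be a field. The set of 3×3 matrices of the form [[a, b, c], [0, a², 2ab], [0, 0, a³]] with a ∈ kˣ and b, c ∈ k is a subgroup of GL₃(k), and the group of k-algebra automorphisms of k[X]/(X⁴) is isomorphic, as a group, to this subgroup. -/
/-!
An algebra endomorphism `f` of `𝓔 = k[X]/(X⁴)` is determined by `f ξ`, where `ξ` is the class
of `X`. Since `f ξ` is nilpotent, over a reduced ring its constant term vanishes, so
`f ξ = a ξ + b ξ² + c ξ³`. Substituting one such cubic into another gives a composition law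
which is the product of the matrices `[[a, b, c], [0, a², 2ab], [0, 0, a³]]` taken in the
opposite order. Hence `e ↦ matrix of e⁻¹` is an injective group homomorphism from the
automorphisms to `GL₃(k)`; `a` is a unit because the `(0,0)` entries multiply to `1` along
`e ∘ e⁻¹ = id`, and conversely every such matrix with `a` a unit is attained.
-/

open Polynomial

noncomputable section

namespace TruncatedPolynomial

variable {k : Type*} [CommRing k]

/-- `AdjoinRoot f` is by definition `k[X] ⧸ Ideal.span {f}`. -/
abbrev 𝓔 (k : Type*) [CommRing k] := AdjoinRoot ((X : k[X]) ^ 4)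

def ξ : 𝓔 k := AdjoinRoot.root _

@[simp] lemma ξ_pow_four : (ξ : 𝓔 k) ^ 4 = 0 := by
  rw [ξ, ← AdjoinRoot.mk_X, ← map_pow, AdjoinRoot.mk_self]

lemma algHom_ext {S : Type*} [Semiring S] [Algebra k S] {f g : 𝓔 k →ₐ[k] S}
    (h : f ξ = g ξ) : f = g :=
  AdjoinRoot.algHom_ext h

def cubic (a b c : k) : 𝓔 k := a • ξ + b • ξ ^ 2 + c • ξ ^ 3

lemma cubic_pow_four (a b c : k) : cubic a b c ^ 4 = 0 := by
  rw [cubic, show a • ξ + b • ξ ^ 2 + c • ξ ^ 3 = ξ * (a • (1 : 𝓔 k) + b • ξ + c • ξ ^ 2) by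
    simp only [Algebra.smul_def, mul_one]; ring, mul_pow, ξ_pow_four, zero_mul]

def subst (a b c : k) : 𝓔 k →ₐ[k] 𝓔 k :=
  AdjoinRoot.liftAlgHom _ (Algebra.ofId k _) (cubic a b c) (by simp [cubic_pow_four])

@[simp] lemma subst_ξ (a b c : k) : subst a b c ξ = cubic a b c :=
  AdjoinRoot.liftAlgHom_root _ _ _ _

lemma subst_comp_subst (a b c a' b' c' : k) :
    (subst a b c).comp (subst a' b' c') =
      subst (a * a') (a' * b + a ^ 2 * b') (a' * c + 2 * a * b * b' + a ^ 3 * c') := by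
  apply algHom_ext
  have h : ∀ n, 4 ≤ n → (ξ : 𝓔 k) ^ n = 0 := fun n hn => pow_eq_zero_of_le hn ξ_pow_four
  simp only [AlgHom.comp_apply, subst_ξ, cubic, map_add, map_smul, map_pow]
  simp only [Algebra.smul_def, map_mul, map_add, map_pow, map_ofNat]
  ring_nf
  simp [h]

lemma subst_one_zero_zero : subst (1 : k) 0 0 = AlgHom.id k (𝓔 k) := by
  apply algHom_ext; simp [cubic]

def coeff (z : 𝓔 k) (n : ℕ) : k := (AdjoinRoot.modByMonicHom (monic_X_pow 4) z).coeff n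

lemma as_sum_coeff (z : 𝓔 k) :
    z = algebraMap k _ (coeff z 0) + coeff z 1 • ξ + coeff z 2 • ξ ^ 2 + coeff z 3 • ξ ^ 3 := by
  obtain ⟨f, rfl⟩ := AdjoinRoot.mk_surjective z
  have hdeg : (f %ₘ X ^ 4).natDegree < 4 := by
    nontriviality k
    simpa using natDegree_modByMonic_lt f (monic_X_pow 4)
      fun h => by simpa using congrArg (natDegree (R := k)) h
  conv_lhs => rw [← AdjoinRoot.mk_leftInverse (monic_X_pow 4) (AdjoinRoot.mk _ f),
    AdjoinRoot.modByMonicHom_mk, as_sum_range' _ 4 hdeg]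
  simp [Finset.sum_range_succ, ← C_mul_X_pow_eq_monomial, ξ, Algebra.smul_def,
    AdjoinRoot.algebraMap_eq, coeff, AdjoinRoot.modByMonicHom_mk]

lemma coeff_cubic (a b c : k) (n : ℕ) :
    coeff (cubic a b c) n = (C a * X + C b * X ^ 2 + C c * X ^ 3).coeff n := by
  nontriviality k
  have h : cubic a b c = AdjoinRoot.mk _ (C a * X + C b * X ^ 2 + C c * X ^ 3) := by
    simp [cubic, ξ, Algebra.smul_def, AdjoinRoot.algebraMap_eq]
  rw [coeff, h, AdjoinRoot.modByMonicHom_mk, (modByMonic_eq_self_iff (monic_X_pow 4)).2]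
  rw [degree_X_pow]
  refine (?_ : _ ≤ ((3 : ℕ) : WithBot ℕ)).trans_lt (by norm_num)
  compute_degree!

@[simp] lemma coeff_cubic_one (a b c : k) : coeff (cubic a b c) 1 = a := by simp [coeff_cubic]
@[simp] lemma coeff_cubic_two (a b c : k) : coeff (cubic a b c) 2 = b := by simp [coeff_cubic]
@[simp] lemma coeff_cubic_three (a b c : k) : coeff (cubic a b c) 3 = c := by simp [coeff_cubic]

/-- Row `i` holds the coordinates of `subst a b c (ξ ^ (i + 1))` in the basis `ξ, ξ², ξ³`. -/
def substMatrix (a b c : k) : Matrix (Fin 3) (Fin 3) k :=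
  !![a, b, c; 0, a ^ 2, 2 * a * b; 0, 0, a ^ 3]

lemma substMatrix_mul (a b c a' b' c' : k) :
    substMatrix a' b' c' * substMatrix a b c =
      substMatrix (a * a') (a' * b + a ^ 2 * b') (a' * c + 2 * a * b * b' + a ^ 3 * c') := by
  simp only [substMatrix, Matrix.mul_fin_three]
  congr 1
  ring_nf

lemma substMatrix_one_zero_zero : substMatrix (1 : k) 0 0 = 1 := by
  simp [substMatrix, Matrix.one_fin_three]

lemma substMatrix_inj {a b c a' b' c' : k} :
    substMatrix a b c = substMatrix a' b' c' ↔ a = a' ∧ b = b' ∧ c = c' := by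
  refine ⟨fun h => ⟨?_, ?_, ?_⟩, by rintro ⟨rfl, rfl, rfl⟩; rfl⟩
  · simpa [substMatrix] using congrFun (congrFun h 0) 0
  · simpa [substMatrix] using congrFun (congrFun h 0) 1
  · simpa [substMatrix] using congrFun (congrFun h 0) 2

def toMatrix (f : 𝓔 k →ₐ[k] 𝓔 k) : Matrix (Fin 3) (Fin 3) k :=
  substMatrix (coeff (f ξ) 1) (coeff (f ξ) 2) (coeff (f ξ) 3)

@[simp] lemma toMatrix_subst (a b c : k) : toMatrix (subst a b c) = substMatrix a b c := by
  simp [toMatrix]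

lemma toMatrix_id : toMatrix (AlgHom.id k (𝓔 k)) = 1 := by
  rw [← subst_one_zero_zero, toMatrix_subst, substMatrix_one_zero_zero]

def substEquiv (a : kˣ) (b c : k) : 𝓔 k ≃ₐ[k] 𝓔 k :=
  AlgEquiv.ofAlgHom (subst a b c)
    (subst ↑a⁻¹ (-b * ↑a⁻¹ ^ 3) (2 * b ^ 2 * ↑a⁻¹ ^ 5 - c * ↑a⁻¹ ^ 4))
    (by
      rw [subst_comp_subst, ← subst_one_zero_zero]
      congr 1
      · exact a.mul_inv
      · linear_combination (-↑a⁻¹ * b * (a * ↑a⁻¹ + 1)) * a.mul_inv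
      · linear_combination (-↑a⁻¹ * c * (a ^ 2 * ↑a⁻¹ ^ 2 + a * ↑a⁻¹ + 1)
          + 2 * a * b ^ 2 * ↑a⁻¹ ^ 3 * (a * ↑a⁻¹ + 1)) * a.mul_inv)
    (by
      rw [subst_comp_subst, ← subst_one_zero_zero]
      congr 1
      · exact a.inv_mul
      · linear_combination (-b * ↑a⁻¹ ^ 2) * a.mul_inv
      · linear_combination (2 * b ^ 2 * ↑a⁻¹ ^ 4 - ↑a⁻¹ ^ 3 * c) * a.mul_inv)

@[simp] lemma substEquiv_toAlgHom (a : kˣ) (b c : k) :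
    (substEquiv a b c : 𝓔 k →ₐ[k] 𝓔 k) = subst (a : k) b c :=
  rfl

def evalZero : 𝓔 k →ₐ[k] k :=
  AdjoinRoot.liftAlgHom _ (Algebra.ofId k k) 0 (by simp)

@[simp] lemma evalZero_ξ : evalZero (ξ : 𝓔 k) = 0 :=
  AdjoinRoot.liftAlgHom_root _ _ _ _

lemma evalZero_eq_coeff_zero (z : 𝓔 k) : evalZero z = coeff z 0 := by
  conv_lhs => rw [as_sum_coeff z]
  simp only [map_add, map_smul, map_pow, AlgHom.commutes, evalZero_ξ]
  simp

variable [IsReduced k]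

lemma coeff_apply_ξ_zero (f : 𝓔 k →ₐ[k] 𝓔 k) : coeff (f ξ) 0 = 0 := by
  rw [← evalZero_eq_coeff_zero]
  exact IsNilpotent.eq_zero ⟨4, by rw [← map_pow, ← map_pow, ξ_pow_four, map_zero, map_zero]⟩

lemma eq_subst (f : 𝓔 k →ₐ[k] 𝓔 k) :
    f = subst (coeff (f ξ) 1) (coeff (f ξ) 2) (coeff (f ξ) 3) := by
  apply algHom_ext
  conv_lhs => rw [as_sum_coeff (f ξ)]
  simp [coeff_apply_ξ_zero, cubic]

lemma toMatrix_comp (f g : 𝓔 k →ₐ[k] 𝓔 k) : toMatrix (f.comp g) = toMatrix g * toMatrix f := by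
  rw [eq_subst f, eq_subst g]
  simp only [subst_comp_subst, toMatrix_subst, substMatrix_mul]

lemma toMatrix_injective : Function.Injective (toMatrix (k := k)) := by
  intro f g h
  obtain ⟨h1, h2, h3⟩ := substMatrix_inj.1 h
  rw [eq_subst f, eq_subst g, h1, h2, h3]

lemma isUnit_coeff_apply_ξ_one (e : 𝓔 k ≃ₐ[k] 𝓔 k) : IsUnit (coeff (e ξ) 1) := by
  have h := toMatrix_comp (e : 𝓔 k →ₐ[k] 𝓔 k) e.symm
  rw [AlgEquiv.comp_symm, toMatrix_id] at h
  refine IsUnit.of_mul_eq_one_right (coeff (e.symm ξ) 1) ?_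
  simpa [toMatrix, substMatrix, Matrix.mul_apply, Fin.sum_univ_three] using
    (congrFun (congrFun h 0) 0).symm

def toMatrixSymmHom : (𝓔 k ≃ₐ[k] 𝓔 k) →* Matrix (Fin 3) (Fin 3) k where
  toFun e := toMatrix (e.symm : 𝓔 k →ₐ[k] 𝓔 k)
  map_one' := toMatrix_id
  map_mul' e f := toMatrix_comp (f.symm : 𝓔 k →ₐ[k] 𝓔 k) e.symm

def toGL : (𝓔 k ≃ₐ[k] 𝓔 k) →* Matrix.GeneralLinearGroup (Fin 3) k :=
  (Units.map toMatrixSymmHom).comp toUnits.toMonoidHom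

lemma toGL_val (e : 𝓔 k ≃ₐ[k] 𝓔 k) :
    (toGL e : Matrix (Fin 3) (Fin 3) k) = toMatrix (e.symm : 𝓔 k →ₐ[k] 𝓔 k) :=
  rfl

lemma toGL_injective : Function.Injective (toGL (k := k)) := by
  intro e f h
  exact AlgEquiv.symm_bijective.injective
    (AlgEquiv.coe_toAlgHom_injective (toMatrix_injective (congrArg Units.val h)))

lemma mem_range_toGL (M : Matrix.GeneralLinearGroup (Fin 3) k) :
    M ∈ (toGL (k := k)).range ↔
      ∃ (a : kˣ) (b c : k), (M : Matrix (Fin 3) (Fin 3) k) = substMatrix (a : k) b c := by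
  constructor
  · rintro ⟨e, rfl⟩
    exact ⟨(isUnit_coeff_apply_ξ_one e.symm).unit, _, _, rfl⟩
  · rintro ⟨a, b, c, h⟩
    refine ⟨(substEquiv a b c).symm, Units.ext ?_⟩
    rw [toGL_val, h, AlgEquiv.symm_symm, substEquiv_toAlgHom, toMatrix_subst]

end TruncatedPolynomial

end

/-- The set of `3×3` matrices `[[a, b, c], [0, a², 2ab], [0, 0, a³]]` with `a ∈ kˣ`,
`b, c ∈ k` is a subgroup of `GL₃(k)`, and the group of `k`-algebra automorphisms of
`k[X]/(X⁴)` is isomorphic to it. -/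
theorem aut_polyQuot_fourth_iso_subgroup (k : Type) [Field k] :
    ∃ G : Subgroup (Matrix.GeneralLinearGroup (Fin 3) k),
      (∀ M : Matrix.GeneralLinearGroup (Fin 3) k, M ∈ G ↔ ∃ (a : kˣ) (b c : k),
        (M : Matrix (Fin 3) (Fin 3) k) =
          !![(a : k), b, c; 0, (a : k) ^ 2, 2 * (a : k) * b; 0, 0, (a : k) ^ 3]) ∧
      Nonempty (((Polynomial k ⧸ Ideal.span {(Polynomial.X : Polynomial k) ^ 4}) ≃ₐ[k]
        (Polynomial k ⧸ Ideal.span {(Polynomial.X : Polynomial k) ^ 4})) ≃* G) :=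
  ⟨TruncatedPolynomial.toGL.range, TruncatedPolynomial.mem_range_toGL,
    ⟨MonoidHom.ofInjective TruncatedPolynomial.toGL_injective⟩⟩
end

section
/- Let k be a field and let Λ be the exterior algebra over k of a 2-dimensional k-vector space. The set of 3×3 matrices of the form [[a, d, e], [c, b, f], [0, 0, ab − cd]] with a, b, c, d, e, f ∈ k and ab − cd ≠ 0 is a subgroup of GL₃(k), and the group of k-algebra automorphisms of Λ is isomorphic, as a group, to this subgroup. -/
open ExteriorAlgebra

namespace AutExtAux

variable (k : Type) [Field k]

local notation "Λ" => ExteriorAlgebra k (Fin 2 → k)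

noncomputable def x0 : Λ := ι k (Pi.single 0 1)
noncomputable def x1 : Λ := ι k (Pi.single 1 1)
noncomputable def w : Λ := x0 k * x1 k

noncomputable def Gmap : (Fin 3 → k) →ₗ[k] Λ :=
  (LinearMap.proj 0).smulRight (x0 k) + (LinearMap.proj 1).smulRight (x1 k)
    + (LinearMap.proj 2).smulRight (w k)

theorem Gmap_apply (u : Fin 3 → k) : Gmap k u = u 0 • x0 k + u 1 • x1 k + u 2 • w k := rfl

theorem x1_mul_x0 : x1 k * x0 k = - w k := by
  have := ι_add_mul_swap (R := k) (Pi.single 0 1 : Fin 2 → k) (Pi.single 1 1)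
  rw [w, x0, x1]
  linear_combination (norm := noncomm_ring) this

theorem x0_sq : x0 k * x0 k = 0 := ι_sq_zero _
theorem x1_sq : x1 k * x1 k = 0 := ι_sq_zero _
theorem x0_mul_w : x0 k * w k = 0 := by rw [w, ← mul_assoc, x0_sq, zero_mul]
theorem x0_mul_x1 : x0 k * x1 k = w k := rfl
theorem w_mul_x0 : w k * x0 k = 0 := by
  rw [w, mul_assoc, x1_mul_x0, mul_neg, x0_mul_w, neg_zero]
theorem x1_mul_w : x1 k * w k = 0 := by
  rw [w, ← mul_assoc, x1_mul_x0, neg_mul, w, mul_assoc, x1_sq, mul_zero, neg_zero]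
theorem w_mul_x1 : w k * x1 k = 0 := by rw [w, mul_assoc, x1_sq, mul_zero]
theorem w_mul_w : w k * w k = 0 := by rw [w, mul_assoc, x0_mul_x1, x1_mul_w, mul_zero]

theorem Gmap_mul (u v : Fin 3 → k) :
    Gmap k u * Gmap k v = (u 0 * v 1 - u 1 * v 0) • w k := by
  rw [Gmap_apply, Gmap_apply]
  simp only [mul_add, add_mul, smul_mul_smul_comm, x0_sq, x1_sq, x0_mul_w, w_mul_x0,
    x1_mul_w, w_mul_x1, w_mul_w, x1_mul_x0, x0_mul_x1, smul_zero, smul_neg, sub_smul]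
  module

/-! ### Coordinate functionals -/

noncomputable def fam1 (i : Fin 2) : ∀ n, (Fin 2 → k) [⋀^Fin n]→ₗ[k] k := fun n =>
  match n with
  | 1 => AlternatingMap.ofSubsingleton k (Fin 2 → k) k 0 (LinearMap.proj i)
  | _ => 0

noncomputable def fam2 : ∀ n, (Fin 2 → k) [⋀^Fin n]→ₗ[k] k := fun n =>
  match n with
  | 2 => Matrix.detRowAlternating
  | _ => 0

noncomputable def CF : Fin 3 → (Λ →ₗ[k] k) :=
  ![liftAlternating (fam1 k 0), liftAlternating (fam1 k 1), liftAlternating (fam2 k)]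

theorem CF_x0 (j : Fin 3) : CF k j (x0 k) = ![1, 0, 0] j := by
  fin_cases j <;>
    simp [CF, x0, liftAlternating_ι, fam1, fam2]

theorem CF_x1 (j : Fin 3) : CF k j (x1 k) = ![0, 1, 0] j := by
  fin_cases j <;>
    simp [CF, x1, liftAlternating_ι, fam1, fam2]

theorem CF_w (j : Fin 3) : CF k j (w k) = ![0, 0, 1] j := by
  fin_cases j
  · show liftAlternating (fam1 k 0) (ι k (Pi.single 0 1) * ι k (Pi.single 1 1) : Λ) = (0:k)
    rw [liftAlternating_ι_mul, liftAlternating_ι]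
    simp [fam1]
  · show liftAlternating (fam1 k 1) (ι k (Pi.single 0 1) * ι k (Pi.single 1 1) : Λ) = (0:k)
    rw [liftAlternating_ι_mul, liftAlternating_ι]
    simp [fam1]
  · show liftAlternating (fam2 k) (ι k (Pi.single 0 1) * ι k (Pi.single 1 1) : Λ) = (1:k)
    rw [liftAlternating_ι_mul, liftAlternating_ι]
    show (fam2 k 2).curryLeft _ _ = 1
    simp only [fam2, AlternatingMap.curryLeft_apply_apply]
    show Matrix.det (Matrix.of (Matrix.vecCons (Pi.single 0 1) ![Pi.single 1 1])) = 1
    rw [Matrix.det_fin_two]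
    simp

theorem CF_one (j : Fin 3) : CF k j (1 : Λ) = 0 := by
  fin_cases j
  · show liftAlternating (fam1 k 0) (1:Λ) = (0:k)
    rw [liftAlternating_one]; simp [fam1]
  · show liftAlternating (fam1 k 1) (1:Λ) = (0:k)
    rw [liftAlternating_one]; simp [fam1]
  · show liftAlternating (fam2 k) (1:Λ) = (0:k)
    rw [liftAlternating_one]; simp [fam2]

theorem CF_G (j : Fin 3) (u : Fin 3 → k) : CF k j (Gmap k u) = u j := by
  rw [Gmap_apply]
  have := CF_x0 k j; have := CF_x1 k j; have := CF_w k j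
  fin_cases j <;>
    simp_all [map_add, map_smul]

theorem CF_algebraMap (j : Fin 3) (t : k) : CF k j (algebraMap k Λ t) = 0 := by
  rw [Algebra.algebraMap_eq_smul_one, map_smul, CF_one, smul_zero]

theorem inv_ι (m : Fin 2 → k) : algebraMapInv (ι k m : Λ) = 0 := by
  simp [algebraMapInv, lift_ι_apply]

theorem inv_G (u : Fin 3 → k) : algebraMapInv (Gmap k u) = 0 := by
  rw [Gmap_apply]
  simp only [map_add, map_smul, x0, x1, inv_ι, w, map_mul, smul_zero, mul_zero, add_zero,
    zero_mul, smul_eq_mul]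

theorem inv_algebraMap (t : k) : algebraMapInv (algebraMap k Λ t) = t :=
  algebraMap_leftInverse _ t

/-! ### Every element decomposes -/

theorem iota_decomp (v : Fin 2 → k) : (ι k v : Λ) = Gmap k ![v 0, v 1, 0] := by
  have hv : v = v 0 • (Pi.single 0 1 : Fin 2 → k) + v 1 • (Pi.single 1 1 : Fin 2 → k) := by
    funext i; fin_cases i <;> simp
  rw [Gmap_apply]
  simp only [Matrix.cons_val_zero, Matrix.cons_val_one, Matrix.head_cons, zero_smul, add_zero]
  conv_lhs => rw [hv]
  simp [x0, x1, map_add, map_smul]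

theorem decomp (z : Λ) : ∃ t u, z = algebraMap k Λ t + Gmap k u := by
  induction z using ExteriorAlgebra.induction with
  | algebraMap r => exact ⟨r, 0, by simp⟩
  | ι v => exact ⟨0, ![v 0, v 1, 0], by rw [map_zero, zero_add, iota_decomp]⟩
  | mul a b ha hb =>
    obtain ⟨t, u, rfl⟩ := ha
    obtain ⟨s, u', rfl⟩ := hb
    refine ⟨t * s, s • u + t • u' + (u 0 * u' 1 - u 1 * u' 0) • (Pi.single 2 1 : Fin 3 → k), ?_⟩
    have hw : Gmap k (Pi.single 2 1) = w k := by
      rw [Gmap_apply]; simp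
    rw [add_mul, mul_add, mul_add, ← map_mul, map_add, map_add, map_smul, map_smul, map_smul, hw,
      Gmap_mul]
    have h1 : algebraMap k Λ t * Gmap k u' = t • Gmap k u' := by
      rw [Algebra.smul_def]
    have h2 : Gmap k u * algebraMap k Λ s = s • Gmap k u := by
      rw [Algebra.smul_def, ← Algebra.commutes]
    rw [h1, h2]
    abel
  | add a b ha hb =>
    obtain ⟨t, u, rfl⟩ := ha
    obtain ⟨s, u', rfl⟩ := hb
    exact ⟨t + s, u + u', by rw [map_add, map_add]; abel⟩

theorem expand (z : Λ) :
    z = algebraMap k Λ (algebraMapInv z) + Gmap k (fun j => CF k j z) := by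
  obtain ⟨t, u, rfl⟩ := decomp k z
  have h1 : algebraMapInv (algebraMap k Λ t + Gmap k u) = t := by
    rw [map_add, inv_G, inv_algebraMap, add_zero]
  have h2 : (fun j => CF k j (algebraMap k Λ t + Gmap k u)) = u := by
    funext j; rw [map_add, CF_G, CF_algebraMap, zero_add]
  rw [h1, h2]

/-! ### Matrices, algebra homs -/

def P (m : Matrix (Fin 3) (Fin 3) k) : Prop :=
  m 2 0 = 0 ∧ m 2 1 = 0 ∧ m 2 2 = m 0 0 * m 1 1 - m 1 0 * m 0 1

def topRows (m : Matrix (Fin 3) (Fin 3) k) : Matrix (Fin 2) (Fin 3) k :=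
  Matrix.of ![m 0, m 1]

noncomputable def Lmap (m : Matrix (Fin 3) (Fin 3) k) : (Fin 2 → k) →ₗ[k] Λ :=
  (Gmap k) ∘ₗ (topRows k m).vecMulLinear

theorem Lmap_apply (m : Matrix (Fin 3) (Fin 3) k) (v : Fin 2 → k) :
    Lmap k m v = Gmap k (Matrix.vecMul v (topRows k m)) := rfl

theorem Lmap_sq (m : Matrix (Fin 3) (Fin 3) k) (v : Fin 2 → k) :
    Lmap k m v * Lmap k m v = 0 := by
  rw [Lmap_apply, Gmap_mul, mul_comm, sub_self, zero_smul]

noncomputable def Psi (m : Matrix (Fin 3) (Fin 3) k) : Λ →ₐ[k] Λ :=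
  lift k ⟨Lmap k m, Lmap_sq k m⟩

theorem Psi_ι (m : Matrix (Fin 3) (Fin 3) k) (v : Fin 2 → k) :
    Psi k m (ι k v) = Gmap k (Matrix.vecMul v (topRows k m)) :=
  lift_ι_apply _ _ _ _

theorem vecMul_single0 (m : Matrix (Fin 3) (Fin 3) k) :
    Matrix.vecMul (Pi.single 0 1 : Fin 2 → k) (topRows k m) = m 0 := by
  funext j
  simp [Matrix.vecMul, dotProduct, Fin.sum_univ_two, topRows]

theorem vecMul_single1 (m : Matrix (Fin 3) (Fin 3) k) :
    Matrix.vecMul (Pi.single 1 1 : Fin 2 → k) (topRows k m) = m 1 := by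
  funext j
  simp [Matrix.vecMul, dotProduct, Fin.sum_univ_two, topRows]

theorem Psi_x0 (m : Matrix (Fin 3) (Fin 3) k) : Psi k m (x0 k) = Gmap k (m 0) := by
  rw [x0, Psi_ι, vecMul_single0]

theorem Psi_x1 (m : Matrix (Fin 3) (Fin 3) k) : Psi k m (x1 k) = Gmap k (m 1) := by
  rw [x1, Psi_ι, vecMul_single1]

theorem Psi_w {m : Matrix (Fin 3) (Fin 3) k} (hm : P k m) : Psi k m (w k) = Gmap k (m 2) := by
  rw [w, map_mul, Psi_x0, Psi_x1, Gmap_mul]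
  rw [Gmap_apply, hm.1, hm.2.1, hm.2.2]
  rw [zero_smul, zero_smul, zero_add, zero_add]
  ring_nf

theorem Psi_G {m : Matrix (Fin 3) (Fin 3) k} (hm : P k m) (u : Fin 3 → k) :
    Psi k m (Gmap k u) = Gmap k (Matrix.vecMul u m) := by
  have hv : Matrix.vecMul u m = u 0 • m 0 + u 1 • m 1 + u 2 • m 2 := by
    funext j
    simp [Matrix.vecMul, dotProduct, Fin.sum_univ_three]
  rw [Gmap_apply, map_add, map_add, map_smul, map_smul, map_smul, Psi_x0, Psi_x1, Psi_w k hm,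
    hv, map_add, map_add, map_smul, map_smul, map_smul]

theorem topRows_mul (n m : Matrix (Fin 3) (Fin 3) k) :
    topRows k n * m = topRows k (n * m) := by
  ext i j
  fin_cases i <;> simp [topRows, Matrix.mul_apply]

theorem Psi_comp {m : Matrix (Fin 3) (Fin 3) k} (hm : P k m) (n : Matrix (Fin 3) (Fin 3) k) :
    (Psi k m).comp (Psi k n) = Psi k (n * m) := by
  apply ExteriorAlgebra.hom_ext
  apply LinearMap.ext
  intro v
  show Psi k m (Psi k n (ι k v)) = Psi k (n * m) (ι k v)
  rw [Psi_ι, Psi_G k hm, Psi_ι, Matrix.vecMul_vecMul, topRows_mul]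

theorem Psi_one : Psi k 1 = AlgHom.id k Λ := by
  apply ExteriorAlgebra.hom_ext
  apply LinearMap.ext
  intro v
  show Psi k 1 (ι k v) = ι k v
  rw [Psi_ι, iota_decomp]
  congr 1
  funext j
  fin_cases j <;>
    simp [Matrix.vecMul, dotProduct, Fin.sum_univ_two, topRows, Matrix.one_apply]

/-! ### From homs to matrices -/

noncomputable def yv : Fin 3 → Λ := ![x0 k, x1 k, w k]

noncomputable def toM (φ : Λ →ₐ[k] Λ) : Matrix (Fin 3) (Fin 3) k :=
  Matrix.of fun i j => CF k j (φ (yv k i))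

theorem toM_apply (φ : Λ →ₐ[k] Λ) (i j : Fin 3) : toM k φ i j = CF k j (φ (yv k i)) := rfl

theorem inv_apply_y (φ : Λ →ₐ[k] Λ) (i : Fin 3) : algebraMapInv (φ (yv k i)) = 0 := by
  have h0 : algebraMapInv (φ (x0 k)) = 0 := by
    have : algebraMapInv (φ (x0 k)) * algebraMapInv (φ (x0 k)) = 0 := by
      rw [← map_mul, ← map_mul, x0_sq, map_zero, map_zero]
    exact mul_self_eq_zero.mp this
  have h1 : algebraMapInv (φ (x1 k)) = 0 := by
    have : algebraMapInv (φ (x1 k)) * algebraMapInv (φ (x1 k)) = 0 := by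
      rw [← map_mul, ← map_mul, x1_sq, map_zero, map_zero]
    exact mul_self_eq_zero.mp this
  fin_cases i
  · exact h0
  · exact h1
  · show algebraMapInv (φ (w k)) = 0
    rw [w, map_mul, map_mul, h0, zero_mul]

theorem apply_y (φ : Λ →ₐ[k] Λ) (i : Fin 3) : φ (yv k i) = Gmap k (toM k φ i) := by
  conv_lhs => rw [expand k (φ (yv k i))]
  rw [inv_apply_y, map_zero, zero_add]
  rfl

theorem apply_G (φ : Λ →ₐ[k] Λ) (u : Fin 3 → k) :
    φ (Gmap k u) = Gmap k (Matrix.vecMul u (toM k φ)) := by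
  have hv : Matrix.vecMul u (toM k φ) =
      u 0 • toM k φ 0 + u 1 • toM k φ 1 + u 2 • toM k φ 2 := by
    funext j
    simp [Matrix.vecMul, dotProduct, Fin.sum_univ_three]
  have hx0 : φ (x0 k) = Gmap k (toM k φ 0) := apply_y k φ 0
  have hx1 : φ (x1 k) = Gmap k (toM k φ 1) := apply_y k φ 1
  have hw : φ (w k) = Gmap k (toM k φ 2) := apply_y k φ 2
  rw [Gmap_apply, map_add, map_add, map_smul, map_smul, map_smul, hx0, hx1, hw, hv,
    map_add, map_add, map_smul, map_smul, map_smul]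

theorem toM_Psi {m : Matrix (Fin 3) (Fin 3) k} (hm : P k m) : toM k (Psi k m) = m := by
  ext i j
  rw [toM_apply]
  have : Psi k m (yv k i) = Gmap k (m i) := by
    fin_cases i
    · exact Psi_x0 k m
    · exact Psi_x1 k m
    · exact Psi_w k hm
  rw [this, CF_G]

theorem Psi_toM (φ : Λ →ₐ[k] Λ) : Psi k (toM k φ) = φ := by
  apply ExteriorAlgebra.hom_ext
  apply LinearMap.ext
  intro v
  show Psi k (toM k φ) (ι k v) = φ (ι k v)
  rw [Psi_ι, iota_decomp, apply_G]
  congr 1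
  funext j
  simp [Matrix.vecMul, dotProduct, Fin.sum_univ_two, Fin.sum_univ_three, topRows]

theorem toM_comp (f g : Λ →ₐ[k] Λ) : toM k (f.comp g) = toM k g * toM k f := by
  ext i j
  rw [toM_apply, Matrix.mul_apply]
  show CF k j (f (g (yv k i))) = _
  rw [apply_y k g i, apply_G, CF_G]
  simp [Matrix.vecMul, dotProduct, Fin.sum_univ_three]

theorem toM_id : toM k (AlgHom.id k Λ) = 1 := by
  ext i j
  rw [toM_apply]
  show CF k j (yv k i) = _
  have h0 := CF_x0 k j; have h1 := CF_x1 k j; have hw := CF_w k j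
  fin_cases i <;> fin_cases j <;>
    simp_all [yv, Matrix.one_apply]

theorem P_toM (φ : Λ →ₐ[k] Λ) : P k (toM k φ) := by
  have hw : φ (w k) = (toM k φ 0 0 * toM k φ 1 1 - toM k φ 0 1 * toM k φ 1 0) • w k := by
    rw [w, map_mul]
    rw [show φ (x0 k) = Gmap k (toM k φ 0) from apply_y k φ 0,
      show φ (x1 k) = Gmap k (toM k φ 1) from apply_y k φ 1, Gmap_mul]
    rfl
  refine ⟨?_, ?_, ?_⟩
  · rw [toM_apply]
    show CF k 0 (φ (w k)) = 0
    rw [hw, map_smul, CF_w]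
    simp
  · rw [toM_apply]
    show CF k 1 (φ (w k)) = 0
    rw [hw, map_smul, CF_w]
    simp
  · rw [toM_apply]
    show CF k 2 (φ (w k)) = _
    rw [hw, map_smul, CF_w]
    simp only [Matrix.cons_val_two, Matrix.tail_cons, Matrix.head_cons, smul_eq_mul, mul_one]
    ring



/-! ### The subgroup -/

theorem P_mul {A B : Matrix (Fin 3) (Fin 3) k} (hA : P k A) (hB : P k B) : P k (A * B) := by
  obtain ⟨hA1, hA2, hA3⟩ := hA
  obtain ⟨hB1, hB2, hB3⟩ := hB
  refine ⟨?_, ?_, ?_⟩ <;>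
    · simp only [Matrix.mul_apply, Fin.sum_univ_three]
      simp only [hA1, hA2, hA3, hB1, hB2, hB3]
      ring

theorem P_one : P k (1 : Matrix (Fin 3) (Fin 3) k) := by
  refine ⟨?_, ?_, ?_⟩ <;> simp [Matrix.one_apply]

theorem P_inv {M : Matrix.GeneralLinearGroup (Fin 3) k}
    (hM : P k (M : Matrix (Fin 3) (Fin 3) k)) :
    P k ((↑(M⁻¹) : Matrix (Fin 3) (Fin 3) k)) := by
  set A : Matrix (Fin 3) (Fin 3) k := ↑M with hA
  set B : Matrix (Fin 3) (Fin 3) k := ↑(M⁻¹) with hB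
  obtain ⟨h1, h2, h3⟩ := hM
  have hAB : A * B = 1 := M.mul_inv
  have hBA : B * A = 1 := M.inv_mul
  have e : ∀ i j : Fin 3, A i 0 * B 0 j + A i 1 * B 1 j + A i 2 * B 2 j
      = (1 : Matrix (Fin 3) (Fin 3) k) i j := by
    intro i j
    have := congrFun (congrFun hAB i) j
    rwa [Matrix.mul_apply, Fin.sum_univ_three] at this
  have f : ∀ i j : Fin 3, B i 0 * A 0 j + B i 1 * A 1 j + B i 2 * A 2 j
      = (1 : Matrix (Fin 3) (Fin 3) k) i j := by
    intro i j
    have := congrFun (congrFun hBA i) j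
    rwa [Matrix.mul_apply, Fin.sum_univ_three] at this
  have e20 : A 2 2 * B 2 0 = 0 := by
    have := e 2 0
    rw [h1, h2, Matrix.one_apply_ne (by decide)] at this
    linear_combination this
  have e21 : A 2 2 * B 2 1 = 0 := by
    have := e 2 1
    rw [h1, h2, Matrix.one_apply_ne (by decide)] at this
    linear_combination this
  have e22 : A 2 2 * B 2 2 = 1 := by
    have := e 2 2
    rw [h1, h2, Matrix.one_apply_eq] at this
    linear_combination this
  have hA22 : A 2 2 ≠ 0 := left_ne_zero_of_mul_eq_one e22
  have f00 : B 0 0 * A 0 0 + B 0 1 * A 1 0 + B 0 2 * A 2 0 = 1 := by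
    rw [f 0 0, Matrix.one_apply_eq]
  have f01 : B 0 0 * A 0 1 + B 0 1 * A 1 1 + B 0 2 * A 2 1 = 0 := by
    rw [f 0 1]; exact Matrix.one_apply_ne (by decide)
  have f10 : B 1 0 * A 0 0 + B 1 1 * A 1 0 + B 1 2 * A 2 0 = 0 := by
    rw [f 1 0]; exact Matrix.one_apply_ne (by decide)
  have f11 : B 1 0 * A 0 1 + B 1 1 * A 1 1 + B 1 2 * A 2 1 = 1 := by
    rw [f 1 1, Matrix.one_apply_eq]
  rw [h1, mul_zero, add_zero] at f00 f10
  rw [h2, mul_zero, add_zero] at f01 f11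
  refine ⟨?_, ?_, ?_⟩
  · exact (mul_eq_zero.mp e20).resolve_left hA22
  · exact (mul_eq_zero.mp e21).resolve_left hA22
  · have hdet : (B 0 0 * B 1 1 - B 1 0 * B 0 1) * A 2 2 = 1 := by
      rw [h3]
      calc (B 0 0 * B 1 1 - B 1 0 * B 0 1) * (A 0 0 * A 1 1 - A 1 0 * A 0 1)
          = (B 0 0 * A 0 0 + B 0 1 * A 1 0) * (B 1 0 * A 0 1 + B 1 1 * A 1 1)
            - (B 0 0 * A 0 1 + B 0 1 * A 1 1) * (B 1 0 * A 0 0 + B 1 1 * A 1 0) := by ring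
        _ = 1 * 1 - 0 * 0 := by rw [f00, f01, f10, f11]
        _ = 1 := by ring
    have hB22 : B 2 2 * A 2 2 = 1 := by linear_combination e22
    have := mul_right_cancel₀ hA22 (hB22.trans hdet.symm)
    exact this

noncomputable def Gsub : Subgroup (Matrix.GeneralLinearGroup (Fin 3) k) where
  carrier := {M | P k (M : Matrix (Fin 3) (Fin 3) k)}
  one_mem' := by
    show P k ((1 : Matrix.GeneralLinearGroup (Fin 3) k) : Matrix (Fin 3) (Fin 3) k)
    rw [Units.val_one]
    exact P_one k
  mul_mem' := by
    intro a b ha hb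
    show P k ((a * b : Matrix.GeneralLinearGroup (Fin 3) k) : Matrix (Fin 3) (Fin 3) k)
    rw [Units.val_mul]
    exact P_mul k ha hb
  inv_mem' := by
    intro a ha
    exact P_inv k ha

theorem A22_ne_zero {M : Matrix.GeneralLinearGroup (Fin 3) k}
    (hM : P k (M : Matrix (Fin 3) (Fin 3) k)) :
    (M : Matrix (Fin 3) (Fin 3) k) 2 2 ≠ 0 := by
  set A : Matrix (Fin 3) (Fin 3) k := ↑M
  set B : Matrix (Fin 3) (Fin 3) k := ↑(M⁻¹)
  have hAB : A * B = 1 := M.mul_inv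
  have e22 : A 2 2 * B 2 2 = 1 := by
    have := congrFun (congrFun hAB 2) 2
    rw [Matrix.mul_apply, Fin.sum_univ_three, hM.1, hM.2.1, Matrix.one_apply_eq] at this
    linear_combination this
  exact left_ne_zero_of_mul_eq_one e22

theorem mem_iff (M : Matrix.GeneralLinearGroup (Fin 3) k) :
    M ∈ Gsub k ↔ ∃ a b c d e f : k,
      a * b - c * d ≠ 0 ∧
      (M : Matrix (Fin 3) (Fin 3) k) = !![a, d, e; c, b, f; 0, 0, a * b - c * d] := by
  constructor
  · intro hM
    have hM' : P k (M : Matrix (Fin 3) (Fin 3) k) := hM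
    set A : Matrix (Fin 3) (Fin 3) k := ↑M
    refine ⟨A 0 0, A 1 1, A 1 0, A 0 1, A 0 2, A 1 2, ?_, ?_⟩
    · rw [← hM'.2.2]
      exact A22_ne_zero k hM'
    · ext i j
      fin_cases i <;> fin_cases j <;>
        simp [hM'.1, hM'.2.1, ← hM'.2.2]
  · rintro ⟨a, b, c, d, e, f, -, hMeq⟩
    show P k (M : Matrix (Fin 3) (Fin 3) k)
    rw [hMeq]
    refine ⟨?_, ?_, ?_⟩ <;> simp

/-! ### The isomorphism -/

theorem P_coe_inv {M : Matrix.GeneralLinearGroup (Fin 3) k} (hM : M ∈ Gsub k) :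
    P k ((↑(M⁻¹) : Matrix (Fin 3) (Fin 3) k)) :=
  P_inv k hM

noncomputable def equivOf (M : Matrix.GeneralLinearGroup (Fin 3) k) (hM : M ∈ Gsub k) :
    Λ ≃ₐ[k] Λ :=
  AlgEquiv.ofAlgHom (Psi k (↑(M⁻¹) : Matrix (Fin 3) (Fin 3) k))
    (Psi k (M : Matrix (Fin 3) (Fin 3) k))
    (by
      rw [Psi_comp k (P_coe_inv k hM), ← Units.val_mul, mul_inv_cancel, Units.val_one, Psi_one])
    (by
      rw [Psi_comp k (hM : P k (M : Matrix (Fin 3) (Fin 3) k)), ← Units.val_mul,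
        inv_mul_cancel, Units.val_one, Psi_one])

theorem equivOf_apply (M : Matrix.GeneralLinearGroup (Fin 3) k) (hM : M ∈ Gsub k) (z : Λ) :
    equivOf k M hM z = Psi k (↑(M⁻¹) : Matrix (Fin 3) (Fin 3) k) z := rfl

noncomputable def Theta : Gsub k →* (Λ ≃ₐ[k] Λ) where
  toFun M := equivOf k M.1 M.2
  map_one' := by
    apply AlgEquiv.ext
    intro z
    rw [equivOf_apply]
    show Psi k (↑((1 : Matrix.GeneralLinearGroup (Fin 3) k)⁻¹) : Matrix (Fin 3) (Fin 3) k) z = z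
    rw [inv_one, Units.val_one, Psi_one]
    rfl
  map_mul' := by
    intro M N
    apply AlgEquiv.ext
    intro z
    rw [AlgEquiv.aut_mul]
    show Psi k (↑(((M : Matrix.GeneralLinearGroup (Fin 3) k) * N)⁻¹) : Matrix (Fin 3) (Fin 3) k) z
      = Psi k (↑((M : Matrix.GeneralLinearGroup (Fin 3) k)⁻¹) : Matrix (Fin 3) (Fin 3) k)
          (Psi k (↑((N : Matrix.GeneralLinearGroup (Fin 3) k)⁻¹) : Matrix (Fin 3) (Fin 3) k) z)
    have := Psi_comp k (m := (↑((M : Matrix.GeneralLinearGroup (Fin 3) k)⁻¹) : Matrix (Fin 3) (Fin 3) k))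
      (P_coe_inv k M.2) (↑((N : Matrix.GeneralLinearGroup (Fin 3) k)⁻¹) : Matrix (Fin 3) (Fin 3) k)
    have h2 : Psi k ((↑((N : Matrix.GeneralLinearGroup (Fin 3) k)⁻¹) : Matrix (Fin 3) (Fin 3) k)
        * (↑((M : Matrix.GeneralLinearGroup (Fin 3) k)⁻¹) : Matrix (Fin 3) (Fin 3) k)) z
        = Psi k (↑((M : Matrix.GeneralLinearGroup (Fin 3) k)⁻¹) : Matrix (Fin 3) (Fin 3) k)
          (Psi k (↑((N : Matrix.GeneralLinearGroup (Fin 3) k)⁻¹) : Matrix (Fin 3) (Fin 3) k) z) := by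
      rw [← this]; rfl
    rw [← h2, ← Units.val_mul, ← mul_inv_rev]
  
theorem Theta_injective : Function.Injective (Theta k) := by
  intro M N h
  have hfun : ∀ z : Λ, Psi k (↑((M : Matrix.GeneralLinearGroup (Fin 3) k)⁻¹) : Matrix (Fin 3) (Fin 3) k) z
      = Psi k (↑((N : Matrix.GeneralLinearGroup (Fin 3) k)⁻¹) : Matrix (Fin 3) (Fin 3) k) z := by
    intro z
    have := congrArg (fun (ψ : Λ ≃ₐ[k] Λ) => ψ z) h
    exact this
  have hhom : Psi k (↑((M : Matrix.GeneralLinearGroup (Fin 3) k)⁻¹) : Matrix (Fin 3) (Fin 3) k)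
      = Psi k (↑((N : Matrix.GeneralLinearGroup (Fin 3) k)⁻¹) : Matrix (Fin 3) (Fin 3) k) :=
    AlgHom.ext hfun
  have hmat := congrArg (toM k) hhom
  rw [toM_Psi k (P_coe_inv k M.2), toM_Psi k (P_coe_inv k N.2)] at hmat
  have : (M : Matrix.GeneralLinearGroup (Fin 3) k)⁻¹ = (N : Matrix.GeneralLinearGroup (Fin 3) k)⁻¹ :=
    Units.ext hmat
  have : (M : Matrix.GeneralLinearGroup (Fin 3) k) = N := inv_injective this
  exact Subtype.ext this

theorem Theta_surjective : Function.Surjective (Theta k) := by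
  intro φ
  set m : Matrix (Fin 3) (Fin 3) k := toM k (φ : Λ →ₐ[k] Λ) with hm
  set n : Matrix (Fin 3) (Fin 3) k := toM k (φ.symm : Λ →ₐ[k] Λ) with hn
  have hPm : P k m := P_toM k _
  have hPn : P k n := P_toM k _
  have hcomp1 : ((φ.symm : Λ →ₐ[k] Λ).comp (φ : Λ →ₐ[k] Λ)) = AlgHom.id k Λ := by
    apply AlgHom.ext; intro z
    show φ.symm (φ z) = z
    exact φ.symm_apply_apply z
  have hcomp2 : ((φ : Λ →ₐ[k] Λ).comp (φ.symm : Λ →ₐ[k] Λ)) = AlgHom.id k Λ := by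
    apply AlgHom.ext; intro z
    show φ (φ.symm z) = z
    exact φ.apply_symm_apply z
  have hmn : m * n = 1 := by
    have := toM_comp k (φ.symm : Λ →ₐ[k] Λ) (φ : Λ →ₐ[k] Λ)
    rw [hcomp1, toM_id] at this
    exact this.symm
  have hnm : n * m = 1 := by
    have := toM_comp k (φ : Λ →ₐ[k] Λ) (φ.symm : Λ →ₐ[k] Λ)
    rw [hcomp2, toM_id] at this
    exact this.symm
  refine ⟨⟨⟨n, m, hnm, hmn⟩, hPn⟩, ?_⟩
  apply AlgEquiv.ext
  intro z
  show Psi k (↑((⟨n, m, hnm, hmn⟩ : Matrix.GeneralLinearGroup (Fin 3) k)⁻¹) : Matrix (Fin 3) (Fin 3) k) z = φ z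
  have hinv : (↑((⟨n, m, hnm, hmn⟩ : Matrix.GeneralLinearGroup (Fin 3) k)⁻¹) : Matrix (Fin 3) (Fin 3) k) = m := rfl
  rw [hinv, hm, Psi_toM]
  rfl

end AutExtAux

open AutExtAux in
/-- The set of `3×3` matrices `[[a, d, e], [c, b, f], [0, 0, ab − cd]]` with `ab − cd ≠ 0`
is a subgroup of `GL₃(k)`, and the group of `k`-algebra automorphisms of the exterior
algebra of the `2`-dimensional `k`-vector space `k²` is isomorphic to it. -/
theorem aut_exteriorAlgebra_iso_subgroup (k : Type) [Field k] :
    ∃ G : Subgroup (Matrix.GeneralLinearGroup (Fin 3) k),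
      (∀ M : Matrix.GeneralLinearGroup (Fin 3) k, M ∈ G ↔ ∃ a b c d e f : k,
        a * b - c * d ≠ 0 ∧
        (M : Matrix (Fin 3) (Fin 3) k) = !![a, d, e; c, b, f; 0, 0, a * b - c * d]) ∧
      Nonempty ((ExteriorAlgebra k (Fin 2 → k) ≃ₐ[k] ExteriorAlgebra k (Fin 2 → k)) ≃* G) := by
  refine ⟨Gsub k, mem_iff k, ?_⟩
  exact ⟨(MulEquiv.ofBijective (Theta k) ⟨Theta_injective k, Theta_surjective k⟩).symm⟩
end
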